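/- arXiv:1203.2785 — 2 statements merged into one kernel-verified Lean document; each statement's English description precedes it below -/
import Mathlib

section
/- Let S be an order in a simple Artinian ring Q that contains at least one proper right τ-ideal. Then: (1) maximal right τ-ideals of S exist, and every maximal right τ-ideal is a completely prime right ideal; (2) every proper right τ-ideal of S is contained in a maximal right τ-ideal. -/
/-! Basic notions for orders in a simple Artinian ring, following Halimi,
"Right Mori orders". Throughout, `Q` is a ring and `S` a subring of `Q`. -/

section Preamble

variable {Q : Type*} [Ring Q]

/-- `a` is a regular element of the subring `S` of `Q`, i.e. `a ∈ S` and `a` is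
neither a left nor a right zero divisor in `S`. -/
def IsRegularElemIn (S : Subring Q) (a : Q) : Prop :=
  a ∈ S ∧ (∀ b ∈ S, a * b = 0 → b = 0) ∧ (∀ b ∈ S, b * a = 0 → b = 0)

/-- `S` is an order in `Q`: every regular element of `S` is a unit of `Q` and every
element of `Q` is both a left fraction and a right fraction over `S`. -/
def IsOrderIn (S : Subring Q) : Prop :=
  (∀ a : Q, IsRegularElemIn S a → IsUnit a) ∧
  (∀ q : Q, ∃ a b : Q, a ∈ S ∧ IsRegularElemIn S b ∧ b * q = a) ∧
  (∀ q : Q, ∃ a b : Q, a ∈ S ∧ IsRegularElemIn S b ∧ q * b = a)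

/-- A subset of `Q` that is a right `S`-submodule of `Q`. -/
def IsRightModSet (S : Subring Q) (I : Set Q) : Prop :=
  (0 : Q) ∈ I ∧ (∀ x ∈ I, ∀ y ∈ I, x + y ∈ I) ∧ (∀ x ∈ I, -x ∈ I) ∧
    ∀ x ∈ I, ∀ s ∈ S, x * s ∈ I

/-- A subset of `Q` that is a left `S`-submodule of `Q`. -/
def IsLeftModSet (S : Subring Q) (I : Set Q) : Prop :=
  (0 : Q) ∈ I ∧ (∀ x ∈ I, ∀ y ∈ I, x + y ∈ I) ∧ (∀ x ∈ I, -x ∈ I) ∧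
    ∀ x ∈ I, ∀ s ∈ S, s * x ∈ I

/-- A (integral) right ideal of `S`, viewed as a subset of `Q`. -/
def IsRightIdealSet (S : Subring Q) (I : Set Q) : Prop :=
  IsRightModSet S I ∧ I ⊆ (S : Set Q)

/-- A (integral) left ideal of `S`, viewed as a subset of `Q`. -/
def IsLeftIdealSet (S : Subring Q) (I : Set Q) : Prop :=
  IsLeftModSet S I ∧ I ⊆ (S : Set Q)

/-- `(A : B)_r = {q ∈ Q : B q ⊆ A}`. -/
def colonR (A B : Set Q) : Set Q := {q : Q | ∀ b ∈ B, b * q ∈ A}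

/-- `(A : B)_l = {q ∈ Q : q B ⊆ A}`. -/
def colonL (A B : Set Q) : Set Q := {q : Q | ∀ b ∈ B, q * b ∈ A}

/-- `I^ν = (S : (S : I)_l)_r`. -/
def nuR (S : Subring Q) (I : Set Q) : Set Q := colonR (S : Set Q) (colonL (S : Set Q) I)

/-- `^ν I = (S : (S : I)_r)_l`. -/
def nuL (S : Subring Q) (I : Set Q) : Set Q := colonL (S : Set Q) (colonR (S : Set Q) I)

/-- A (fractional) right `S`-ideal: a right `S`-submodule of `Q` containing a regular
element of `S` and with `uI ⊆ S` for some unit `u` of `Q`. -/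
def IsRightSIdeal (S : Subring Q) (I : Set Q) : Prop :=
  IsRightModSet S I ∧ (∃ a ∈ I, IsRegularElemIn S a) ∧
    ∃ u : Qˣ, ∀ x ∈ I, (u : Q) * x ∈ S

/-- A (fractional) left `S`-ideal. -/
def IsLeftSIdeal (S : Subring Q) (I : Set Q) : Prop :=
  IsLeftModSet S I ∧ (∃ a ∈ I, IsRegularElemIn S a) ∧
    ∃ u : Qˣ, ∀ x ∈ I, x * (u : Q) ∈ S

/-- A completely prime right ideal of `S`: a proper right ideal `P` such that for all
`a, b ∈ S`, `aP ⊆ P` and `ab ∈ P` imply `a ∈ P` or `b ∈ P`. -/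
def IsCompletelyPrimeRightIdeal (S : Subring Q) (P : Set Q) : Prop :=
  IsRightIdealSet S P ∧ P ≠ (S : Set Q) ∧
    ∀ a ∈ S, ∀ b ∈ S, (∀ p ∈ P, a * p ∈ P) → a * b ∈ P → a ∈ P ∨ b ∈ P

/-- The right `S`-submodule of `Q` generated by a set `G`. -/
def rightSpan (S : Subring Q) (G : Set Q) : Set Q :=
  ⋂₀ {J : Set Q | IsRightModSet S J ∧ G ⊆ J}

/-- The left `S`-submodule of `Q` generated by a set `G`. -/
def leftSpan (S : Subring Q) (G : Set Q) : Set Q :=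
  ⋂₀ {J : Set Q | IsLeftModSet S J ∧ G ⊆ J}

/-- `I` is a finitely generated right `S`-submodule of `Q`. -/
def IsFGRightModSet (S : Subring Q) (I : Set Q) : Prop :=
  ∃ G : Finset Q, I = rightSpan S ↑G

/-- The ascending chain condition on regular integral right divisorial ideals of `S`. -/
def ACCRightDivisorial (S : Subring Q) : Prop :=
  ∀ f : ℕ → Set Q,
    (∀ n, IsRightIdealSet S (f n) ∧ (∃ a ∈ f n, IsRegularElemIn S a) ∧ nuR S (f n) = f n) →
    (∀ n, f n ⊆ f (n + 1)) → ∃ N, ∀ n, N ≤ n → f n = f N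

/-- The ascending chain condition on regular integral left divisorial ideals of `S`. -/
def ACCLeftDivisorial (S : Subring Q) : Prop :=
  ∀ f : ℕ → Set Q,
    (∀ n, IsLeftIdealSet S (f n) ∧ (∃ a ∈ f n, IsRegularElemIn S a) ∧ nuL S (f n) = f n) →
    (∀ n, f n ⊆ f (n + 1)) → ∃ N, ∀ n, N ≤ n → f n = f N

/-- A right Mori order: an order satisfying the ACC on regular integral right
divisorial ideals. -/
def IsRightMori (S : Subring Q) : Prop := IsOrderIn S ∧ ACCRightDivisorial S

/-- The principal right ideal `aS` of `S`, as a subset of `Q`. -/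
def principalRight (S : Subring Q) (a : Q) : Set Q := {x : Q | ∃ s ∈ S, x = a * s}

/-- The principal left ideal `Sa` of `S`, as a subset of `Q`. -/
def principalLeft (S : Subring Q) (a : Q) : Set Q := {x : Q | ∃ s ∈ S, x = s * a}

/-- A two-sided (integral) ideal of `S`, as a subset of `Q`. -/
def IsTwoSidedIdealSet (S : Subring Q) (I : Set Q) : Prop :=
  IsRightModSet S I ∧ IsLeftModSet S I ∧ I ⊆ (S : Set Q)

/-- A maximal (proper) right ideal of `S`. -/
def IsMaxRightIdeal (S : Subring Q) (M : Set Q) : Prop :=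
  IsRightIdealSet S M ∧ M ≠ (S : Set Q) ∧
    ∀ N, IsRightIdealSet S N → N ≠ (S : Set Q) → M ⊆ N → N = M

/-- A maximal (proper) left ideal of `S`. -/
def IsMaxLeftIdeal (S : Subring Q) (M : Set Q) : Prop :=
  IsLeftIdealSet S M ∧ M ≠ (S : Set Q) ∧
    ∀ N, IsLeftIdealSet S N → N ≠ (S : Set Q) → M ⊆ N → N = M

/-- `S` is local with (Jacobson radical) `M`: `M` is a two-sided ideal which is the
only maximal right ideal and the only maximal left ideal of `S`. -/
def IsLocalWithMax (S : Subring Q) (M : Set Q) : Prop :=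
  IsTwoSidedIdealSet S M ∧
    IsMaxRightIdeal S M ∧ (∀ N, IsMaxRightIdeal S N → N = M) ∧
    IsMaxLeftIdeal S M ∧ (∀ N, IsMaxLeftIdeal S N → N = M)

/-- A local order. -/
def IsLocalOrder (S : Subring Q) : Prop := IsOrderIn S ∧ ∃ M : Set Q, IsLocalWithMax S M

/-- The additive span of the set of products `a * b` with `a ∈ A`, `b ∈ B`. -/
def mulSpan (A B : Set Q) : Set Q :=
  (AddSubgroup.closure {x : Q | ∃ a ∈ A, ∃ b ∈ B, x = a * b} : AddSubgroup Q)

/-- Powers `M^n` of an ideal `M` of `S` (with `M^0 = S`). -/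
def idealPow (S : Subring Q) (M : Set Q) : ℕ → Set Q
  | 0 => (S : Set Q)
  | n + 1 => mulSpan M (idealPow S M n)

/-- A right `τ`-ideal of `S`: a right ideal `J` such that `F^ν ⊆ J` for every finitely
generated right ideal `F ⊆ J`. -/
def IsRightTauIdeal (S : Subring Q) (J : Set Q) : Prop :=
  IsRightIdealSet S J ∧
    ∀ F : Set Q, IsRightIdealSet S F → IsFGRightModSet S F → F ⊆ J → nuR S F ⊆ J

/-- A maximal (proper) right `τ`-ideal of `S`. -/
def IsMaxRightTauIdeal (S : Subring Q) (M : Set Q) : Prop :=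
  IsRightTauIdeal S M ∧ M ≠ (S : Set Q) ∧
    ∀ N, IsRightTauIdeal S N → N ≠ (S : Set Q) → M ⊆ N → N = M

/-- A prime (two-sided) ideal of the order `S`. -/
def IsPrimeIdealSet (S : Subring Q) (P : Set Q) : Prop :=
  IsTwoSidedIdealSet S P ∧ P ≠ (S : Set Q) ∧
    ∀ a ∈ S, ∀ b ∈ S, (∀ s ∈ S, a * s * b ∈ P) → a ∈ P ∨ b ∈ P

/-- A divisorial two-sided (integral) ideal of `S`: `I = I^ν = ^ν I`. -/
def IsDivisorialIdealSet (S : Subring Q) (I : Set Q) : Prop :=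
  IsTwoSidedIdealSet S I ∧ nuR S I = I ∧ nuL S I = I

/-- `D_m(S)`: the set of maximal divisorial (two-sided, integral) ideals of `S`. -/
def maxDivisorialIdeals (S : Subring Q) : Set (Set Q) :=
  {P | IsDivisorialIdealSet S P ∧ P ≠ (S : Set Q) ∧
    ∀ J, IsDivisorialIdealSet S J → J ≠ (S : Set Q) → P ⊆ J → J = P}

/-- `c` is regular modulo the ideal `P` of `S`. -/
def IsRegularModP (S : Subring Q) (P : Set Q) (c : Q) : Prop :=
  c ∈ S ∧ (∀ b ∈ S, c * b ∈ P → b ∈ P) ∧ (∀ b ∈ S, b * c ∈ P → b ∈ P)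

/-- The left order `O_l(M) = {q ∈ Q : qM ⊆ M}` of `M`. -/
def leftOrderOf (M : Set Q) : Set Q := {q : Q | ∀ m ∈ M, q * m ∈ M}

/-- `s` is a unit of the subring `R` of `Q`. -/
def IsUnitIn (R : Subring Q) (s : Q) : Prop :=
  s ∈ R ∧ ∃ t ∈ R, s * t = 1 ∧ t * s = 1

/-- A family of overrings `S = ⋂ᵢ Sᵢ` is of finite character if every nonzero
non-unit of `S` is a non-unit of only finitely many `Sᵢ`. -/
def FiniteCharacter {α : Type*} (S : Subring Q) (F : α → Subring Q) : Prop :=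
  ∀ s ∈ S, s ≠ 0 → ¬IsUnitIn S s → {i : α | ¬IsUnitIn (F i) s}.Finite

/-- `S` is right pseudo-coherent: any (nonempty) finite intersection of principal
right ideals of `S` is a finitely generated right ideal. -/
def RightPseudoCoherent (S : Subring Q) : Prop :=
  ∀ F : Finset Q, ↑F ⊆ (S : Set Q) → F.Nonempty →
    IsFGRightModSet S (⋂ a ∈ F, principalRight S a)

/-- `A :_r x = {s ∈ S : x s ∈ A}`. -/
def colonByElemR (S : Subring Q) (A : Set Q) (x : Q) : Set Q :=
  {s : Q | s ∈ S ∧ x * s ∈ A}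

/-- A `ν`-irreducible right ideal: a right divisorial right ideal which is not the
intersection of two right divisorial right ideals properly containing it. -/
def IsNuIrreducible (S : Subring Q) (I : Set Q) : Prop :=
  IsRightIdealSet S I ∧ nuR S I = I ∧
    ¬∃ A B : Set Q, (IsRightIdealSet S A ∧ nuR S A = A) ∧
      (IsRightIdealSet S B ∧ nuR S B = B) ∧ I ⊂ A ∧ I ⊂ B ∧ I = A ∩ B

/-- A non-commutative (rank one) discrete valuation ring inside `Q`. -/
def IsNCDVR (R : Subring Q) : Prop :=
  IsOrderIn R ∧ ∃ M : Set Q, IsLocalWithMax R M ∧ M ≠ ({0} : Set Q) ∧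
    (∃ p : Q, IsRegularElemIn R p ∧ M = principalRight R p ∧ M = principalLeft R p) ∧
    (⋂ n : ℕ, idealPow R M n) = ({0} : Set Q)

/-- A Krull order in the sense of Marubayashi. -/
def IsKrullOrder (S : Subring Q) : Prop :=
  ∃ (A : Set (Subring Q)) (B : Finset (Subring Q)),
    (∀ R ∈ A, (S : Set Q) ⊆ ↑R ∧ IsNCDVR R) ∧
    (∀ T ∈ B, (S : Set Q) ⊆ ↑T ∧ IsSimpleRing T ∧ IsNoetherianRing T) ∧
    ((S : Set Q) = (⋂ R ∈ A, (R : Set Q)) ∩ ⋂ T ∈ B, (T : Set Q)) ∧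
    ∀ c : Q, IsRegularElemIn S c →
      {R ∈ A | principalRight R c ≠ (R : Set Q)}.Finite ∧
      {R ∈ A | principalLeft R c ≠ (R : Set Q)}.Finite

end Preamble

/-! For any `a ∈ Q`, the colon `{s ∈ S : a s ∈ M}` of a right `τ`-ideal `M` is again a right
`τ`-ideal, because `a F^ν ⊆ (a F)^ν` for every finitely generated `F`. It contains `M` when
`a M ⊆ M` and is proper when `a ∉ M`, so a maximal right `τ`-ideal equals it, which is complete
primeness. Maximal right `τ`-ideals exist by Zorn's lemma: the `τ`-condition only involves
finitely generated right ideals, so it passes to unions of chains. -/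

section

variable {Q : Type*} [Ring Q] {S : Subring Q}

lemma subset_rightSpan (G : Set Q) : G ⊆ rightSpan S G :=
  fun _ hg _ hJ => hJ.2 hg

lemma rightSpan_subset {G K : Set Q} (hK : IsRightModSet S K) (hGK : G ⊆ K) :
    rightSpan S G ⊆ K :=
  fun _ hx => hx K ⟨hK, hGK⟩

lemma isRightModSet_rightSpan (G : Set Q) : IsRightModSet S (rightSpan S G) :=
  ⟨fun _ hJ => hJ.1.1, fun _ hx _ hy J hJ => hJ.1.2.1 _ (hx J hJ) _ (hy J hJ),
    fun _ hx J hJ => hJ.1.2.2.1 _ (hx J hJ), fun _ hx _ hs J hJ => hJ.1.2.2.2 _ (hx J hJ) _ hs⟩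

lemma isRightModSet_coe (S : Subring Q) : IsRightModSet S (S : Set Q) :=
  ⟨S.zero_mem, fun _ hx _ hy => S.add_mem hx hy, fun _ hx => S.neg_mem hx,
    fun _ hx _ hs => S.mul_mem hx hs⟩

lemma IsRightModSet.preimage_mul_left {A : Set Q} (hA : IsRightModSet S A) (q : Q) :
    IsRightModSet S {x | q * x ∈ A} := by
  obtain ⟨h0, hadd, hneg, hmul⟩ := hA
  refine ⟨by simpa using h0, fun x hx y hy => ?_, fun x hx => ?_, fun x hx s hs => ?_⟩
  · simpa only [Set.mem_ofPred_eq, mul_add] using hadd _ hx _ hy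
  · simpa only [Set.mem_ofPred_eq, mul_neg] using hneg _ hx
  · simpa only [Set.mem_ofPred_eq, mul_assoc] using hmul _ hx s hs

lemma IsRightModSet.inter {A B : Set Q} (hA : IsRightModSet S A) (hB : IsRightModSet S B) :
    IsRightModSet S (A ∩ B) :=
  ⟨⟨hA.1, hB.1⟩, fun _ hx _ hy => ⟨hA.2.1 _ hx.1 _ hy.1, hB.2.1 _ hx.2 _ hy.2⟩,
    fun _ hx => ⟨hA.2.2.1 _ hx.1, hB.2.2.1 _ hx.2⟩,
    fun _ hx _ hs => ⟨hA.2.2.2 _ hx.1 _ hs, hB.2.2.2 _ hx.2 _ hs⟩⟩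

lemma IsRightIdealSet.eq_coe_of_one_mem {I : Set Q} (hI : IsRightIdealSet S I)
    (h1 : (1 : Q) ∈ I) : I = S :=
  hI.2.antisymm fun s hs => by simpa using hI.1.2.2.2 1 h1 s hs

lemma nuR_subset_of_subset {I : Set Q} (hI : I ⊆ S) : nuR S I ⊆ S :=
  fun q hq => by simpa using hq 1 fun b hb => by simpa using hI hb

lemma mul_mem_colonL_rightSpan {a z : Q} {G : Set Q}
    (hz : z ∈ colonL (S : Set Q) (rightSpan S ((a * ·) '' G))) :
    z * a ∈ colonL (S : Set Q) (rightSpan S G) := by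
  refine fun x hx => rightSpan_subset ((isRightModSet_coe S).preimage_mul_left (z * a)) ?_ hx
  intro g hg
  simpa only [Set.mem_ofPred_eq, mul_assoc] using hz _ (subset_rightSpan _ ⟨g, hg, rfl⟩)

lemma mul_mem_nuR_rightSpan {a q : Q} {G : Set Q} (hq : q ∈ nuR S (rightSpan S G)) :
    a * q ∈ nuR S (rightSpan S ((a * ·) '' G)) :=
  fun z hz => by simpa only [mul_assoc] using hq _ (mul_mem_colonL_rightSpan hz)

lemma IsRightTauIdeal.colonByElemR {M : Set Q} (hM : IsRightTauIdeal S M) (a : Q) :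
    IsRightTauIdeal S (_root_.colonByElemR S M a) := by
  have hmod : IsRightModSet S (_root_.colonByElemR S M a) :=
    (isRightModSet_coe S).inter (hM.1.1.preimage_mul_left a)
  refine ⟨⟨hmod, fun x hx => hx.1⟩, ?_⟩
  rintro F hF ⟨G, rfl⟩ hFM q hq
  classical
  have haG : rightSpan S ((a * ·) '' (G : Set Q)) ⊆ M :=
    rightSpan_subset hM.1.1 (by rintro _ ⟨g, hg, rfl⟩; exact (hFM (subset_rightSpan _ hg)).2)
  have haGS : rightSpan S ((a * ·) '' (G : Set Q)) ⊆ S :=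
    haG.trans hM.1.2
  have haGfg : IsFGRightModSet S (rightSpan S ((a * ·) '' (G : Set Q))) :=
    ⟨G.image (a * ·), by rw [Finset.coe_image]⟩
  exact ⟨nuR_subset_of_subset hF.2 hq,
    hM.2 _ ⟨isRightModSet_rightSpan _, haGS⟩ haGfg haG (mul_mem_nuR_rightSpan hq)⟩

lemma IsMaxRightTauIdeal.isCompletelyPrimeRightIdeal {M : Set Q}
    (hM : IsMaxRightTauIdeal S M) : IsCompletelyPrimeRightIdeal S M := by
  obtain ⟨hMtau, hMne, hMmax⟩ := hM
  refine ⟨hMtau.1, hMne, fun a _ b hb haM_sub hab => or_iff_not_imp_left.2 fun ha_notMem => ?_⟩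
  have hcolon_ne : colonByElemR S M a ≠ S := fun h =>
    ha_notMem (by simpa using ((h ▸ S.one_mem : (1 : Q) ∈ colonByElemR S M a)).2)
  have hcolon_eq : colonByElemR S M a = M :=
    hMmax _ (hMtau.colonByElemR a) hcolon_ne fun p hp => ⟨hMtau.1.2 hp, haM_sub p hp⟩
  exact hcolon_eq ▸ (⟨hb, hab⟩ : b ∈ colonByElemR S M a)

lemma isRightModSet_sUnion {c : Set (Set Q)} (hc : DirectedOn (· ⊆ ·) c) (hne : c.Nonempty)
    (hmod : ∀ K ∈ c, IsRightModSet S K) : IsRightModSet S (⋃₀ c) := by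
  obtain ⟨K₀, hK₀⟩ := hne
  refine ⟨⟨K₀, hK₀, (hmod K₀ hK₀).1⟩, ?_, ?_, ?_⟩
  · rintro x ⟨K₁, hK₁, hx⟩ y ⟨K₂, hK₂, hy⟩
    obtain ⟨K, hK, h₁, h₂⟩ := hc K₁ hK₁ K₂ hK₂
    exact ⟨K, hK, (hmod K hK).2.1 x (h₁ hx) y (h₂ hy)⟩
  · rintro x ⟨K, hK, hx⟩
    exact ⟨K, hK, (hmod K hK).2.2.1 x hx⟩
  · rintro x ⟨K, hK, hx⟩ s hs
    exact ⟨K, hK, (hmod K hK).2.2.2 x hx s hs⟩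

lemma isRightTauIdeal_sUnion {c : Set (Set Q)} (hc : DirectedOn (· ⊆ ·) c) (hne : c.Nonempty)
    (htau : ∀ K ∈ c, IsRightTauIdeal S K) : IsRightTauIdeal S (⋃₀ c) := by
  refine ⟨⟨isRightModSet_sUnion hc hne fun K hK => (htau K hK).1.1,
    Set.sUnion_subset fun K hK => (htau K hK).1.2⟩, ?_⟩
  rintro F hF ⟨G, rfl⟩ hFc
  obtain ⟨K, hK, hGK⟩ := hc.exists_mem_subset_of_finite_of_subset_sUnion hne G.finite_toSet
    ((subset_rightSpan _).trans hFc)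
  exact ((htau K hK).2 _ hF ⟨G, rfl⟩ (rightSpan_subset (htau K hK).1.1 hGK)).trans
    (Set.subset_sUnion_of_mem hK)

lemma exists_isMaxRightTauIdeal_superset {J : Set Q} (hJ : IsRightTauIdeal S J)
    (hJne : J ≠ S) : ∃ M, IsMaxRightTauIdeal S M ∧ J ⊆ M := by
  obtain ⟨M, hJM, ⟨hMtau, hMne⟩, hMmax⟩ :=
    zorn_subset_nonempty {I | IsRightTauIdeal S I ∧ I ≠ S} (fun c hc hchain hne => by
      have htau : ∀ K ∈ c, IsRightTauIdeal S K := fun K hK => (hc hK).1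
      refine ⟨⋃₀ c, ⟨isRightTauIdeal_sUnion hchain.directedOn hne htau, fun h => ?_⟩,
        fun _ => Set.subset_sUnion_of_mem⟩
      obtain ⟨K, hK, h1K⟩ := (h ▸ S.one_mem : (1 : Q) ∈ ⋃₀ c)
      exact (hc hK).2 ((htau K hK).1.eq_coe_of_one_mem h1K)) J ⟨hJ, hJne⟩
  exact ⟨M, ⟨hMtau, hMne, fun N hN hNne hMN => (hMmax ⟨hN, hNne⟩ hMN).antisymm hMN⟩, hJM⟩

end

theorem maxRightTauIdeals_exist_and_completelyPrime_general
    {Q : Type*} [Ring Q]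
    (S : Subring Q)
    (hex : ∃ J : Set Q, IsRightTauIdeal S J ∧ J ≠ (S : Set Q)) :
    ((∃ M : Set Q, IsMaxRightTauIdeal S M) ∧
      (∀ M : Set Q, IsMaxRightTauIdeal S M → IsCompletelyPrimeRightIdeal S M)) ∧
    (∀ J : Set Q, IsRightTauIdeal S J → J ≠ (S : Set Q) →
      ∃ M : Set Q, IsMaxRightTauIdeal S M ∧ J ⊆ M) := by
  obtain ⟨J, hJ, hJne⟩ := hex
  obtain ⟨M, hM, -⟩ := exists_isMaxRightTauIdeal_superset hJ hJne
  exact ⟨⟨⟨M, hM⟩, fun _ => IsMaxRightTauIdeal.isCompletelyPrimeRightIdeal⟩,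
    fun _ => exists_isMaxRightTauIdeal_superset⟩

/-- Proposition 2.2. If an order `S` in a simple Artinian ring `Q`
contains at least one proper right `τ`-ideal, then (1) maximal right `τ`-ideals exist
and are completely prime right ideals, and (2) every proper right `τ`-ideal is
contained in a maximal right `τ`-ideal. -/
theorem maxRightTauIdeals_exist_and_completelyPrime
    {Q : Type*} [Ring Q] [IsSimpleRing Q] [IsArtinianRing Q]
    (S : Subring Q) (hS : IsOrderIn S)
    (hex : ∃ J : Set Q, IsRightTauIdeal S J ∧ J ≠ (S : Set Q)) :
    ((∃ M : Set Q, IsMaxRightTauIdeal S M) ∧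
      (∀ M : Set Q, IsMaxRightTauIdeal S M → IsCompletelyPrimeRightIdeal S M)) ∧
    (∀ J : Set Q, IsRightTauIdeal S J → J ≠ (S : Set Q) →
      ∃ M : Set Q, IsMaxRightTauIdeal S M ∧ J ⊆ M) :=
  maxRightTauIdeals_exist_and_completelyPrime_general S hex
end

section
/- Let T ⊂ S be local orders in a simple Artinian ring Q with the same prime ideals. Then each non-principal right divisorial ideal of S is a right divisorial ideal of T. -/
/-! The maximal ideal `M` of the local order `S` is prime in `S`, hence, by hypothesis, a prime
ideal of `T`; in particular `M ⊆ T`. For `q ∈ (S : I)_l` and `z ∈ I`, either `q z ∈ M`, or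
`q z v = 1` for some `v ∈ S`; then, Artinian rings being Dedekind-finite, `z (v q) = 1` with
`v q I ⊆ S`, so that `I = z S` is principal. Hence for non-principal `I` we get
`(S : I)_l ⊆ (T : I)_l`, which makes `I` a right `T`-ideal and gives `I^ν(T) ⊆ I^ν(S) = I`. -/

section RightIdeals

variable {Q : Type*} [Ring Q] {S T : Subring Q} {I N : Set Q}

theorem IsRightModSet.of_le (hI : IsRightModSet S I) (hTS : T ≤ S) : IsRightModSet T I :=
  ⟨hI.1, hI.2.1, hI.2.2.1, fun x hx s hs => hI.2.2.2 x hx s (hTS hs)⟩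

theorem IsRightIdealSet.eq_of_one_mem (hN : IsRightIdealSet S N) (h1 : (1 : Q) ∈ N) :
    N = S :=
  Set.Subset.antisymm hN.2 fun s hs => by simpa using hN.1.2.2.2 1 h1 s hs

theorem isRightIdealSet_principalRight {a : Q} (ha : a ∈ S) :
    IsRightIdealSet S (principalRight S a) := by
  refine ⟨⟨⟨0, S.zero_mem, (mul_zero a).symm⟩, ?_, ?_, ?_⟩, ?_⟩
  · rintro _ ⟨s, hs, rfl⟩ _ ⟨t, ht, rfl⟩
    exact ⟨s + t, S.add_mem hs ht, (mul_add a s t).symm⟩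
  · rintro _ ⟨s, hs, rfl⟩
    exact ⟨-s, S.neg_mem hs, (mul_neg a s).symm⟩
  · rintro _ ⟨s, hs, rfl⟩ t ht
    exact ⟨s * t, S.mul_mem hs ht, mul_assoc a s t⟩
  · rintro _ ⟨s, hs, rfl⟩
    exact S.mul_mem ha hs

theorem IsRightIdealSet.sUnion_of_isChain {c : Set (Set Q)}
    (hc : ∀ N ∈ c, IsRightIdealSet S N) (hchain : IsChain (· ⊆ ·) c) (hne : c.Nonempty) :
    IsRightIdealSet S (⋃₀ c) := by
  obtain ⟨N₀, hN₀⟩ := hne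
  refine ⟨⟨⟨N₀, hN₀, (hc N₀ hN₀).1.1⟩, ?_, ?_, ?_⟩, ?_⟩
  · rintro x ⟨N₁, hN₁, hx⟩ y ⟨N₂, hN₂, hy⟩
    rcases hchain.total hN₁ hN₂ with h | h
    · exact ⟨N₂, hN₂, (hc N₂ hN₂).1.2.1 x (h hx) y hy⟩
    · exact ⟨N₁, hN₁, (hc N₁ hN₁).1.2.1 x hx y (h hy)⟩
  · rintro x ⟨N₁, hN₁, hx⟩
    exact ⟨N₁, hN₁, (hc N₁ hN₁).1.2.2.1 x hx⟩
  · rintro x ⟨N₁, hN₁, hx⟩ s hs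
    exact ⟨N₁, hN₁, (hc N₁ hN₁).1.2.2.2 x hx s hs⟩
  · rintro x ⟨N₁, hN₁, hx⟩
    exact (hc N₁ hN₁).2 hx

theorem exists_isMaxRightIdeal_superset (hN : IsRightIdealSet S N) (h1 : (1 : Q) ∉ N) :
    ∃ m, IsMaxRightIdeal S m ∧ N ⊆ m := by
  obtain ⟨m, hNm, hmax⟩ := zorn_subset_nonempty {N | IsRightIdealSet S N ∧ (1 : Q) ∉ N}
    (fun c hc hchain hne => ⟨⋃₀ c,
      ⟨IsRightIdealSet.sUnion_of_isChain (fun N hN => (hc hN).1) hchain hne,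
        fun ⟨N, hN, h1⟩ => (hc hN).2 h1⟩,
      fun _ => Set.subset_sUnion_of_mem⟩) N ⟨hN, h1⟩
  refine ⟨m, ⟨hmax.prop.1, fun hmS => hmax.prop.2 (hmS ▸ S.one_mem), ?_⟩, hNm⟩
  intro N' hN' hN'S hmN'
  have h1N' : (1 : Q) ∉ N' := fun h => hN'S (hN'.eq_of_one_mem h)
  exact (hmax.2 ⟨hN', h1N'⟩ hmN').antisymm hmN'

end RightIdeals

namespace IsLocalWithMax

variable {Q : Type*} [Ring Q] {S : Subring Q} {M I : Set Q}

theorem exists_mul_eq_one (hM : IsLocalWithMax S M) {a : Q} (ha : a ∈ S) (haM : a ∉ M) :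
    ∃ s ∈ S, a * s = 1 := by
  by_contra! h
  have h1 : (1 : Q) ∉ principalRight S a := fun ⟨s, hs, h1⟩ => h s hs h1.symm
  obtain ⟨m, hm, ham⟩ := exists_isMaxRightIdeal_superset (isRightIdealSet_principalRight ha) h1
  exact haM (hM.2.2.1 m hm ▸ ham ⟨1, S.one_mem, (mul_one a).symm⟩)

theorem isPrimeIdealSet (hM : IsLocalWithMax S M) : IsPrimeIdealSet S M := by
  refine ⟨hM.1, hM.2.1.2.1, fun p hp b _ hpb => or_iff_not_imp_left.mpr fun hpM => ?_⟩
  obtain ⟨s, hs, hps⟩ := hM.exists_mul_eq_one hp hpM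
  simpa [hps] using hpb s hs

theorem eq_principalRight_of_mul_not_mem [IsDedekindFiniteMonoid Q] (hM : IsLocalWithMax S M)
    (hI : IsRightModSet S I) {q z : Q} (hq : q ∈ colonL (S : Set Q) I) (hz : z ∈ I)
    (hqz : q * z ∉ M) : I = principalRight S z := by
  obtain ⟨v, hv, hqzv⟩ := hM.exists_mul_eq_one (hq z hz) hqz
  have hzvq : z * (v * q) = 1 := by
    rw [← mul_assoc]
    exact mul_eq_one_symm (by rw [← mul_assoc, hqzv])
  ext y
  refine ⟨fun hy => ⟨v * (q * y), S.mul_mem hv (hq y hy), ?_⟩, ?_⟩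
  · rw [← mul_assoc v, ← mul_assoc, hzvq, one_mul]
  · rintro ⟨s, hs, rfl⟩
    exact hI.2.2.2 z hz s hs

end IsLocalWithMax

section Colon

variable {Q : Type*} [Ring Q] {S T : Subring Q} {I : Set Q}

theorem subset_nuR (S : Subring Q) (I : Set Q) : I ⊆ nuR S I :=
  fun z hz _ hq => hq z hz

theorem nuR_subset_nuR_of_colonL_subset (hTS : T ≤ S)
    (h : colonL (S : Set Q) I ⊆ colonL (T : Set Q) I) : nuR T I ⊆ nuR S I :=
  fun _ hz _ hq => hTS (hz _ (h hq))

theorem IsUnit.isRegularElemIn {c : Q} (hc : IsUnit c) (hcT : c ∈ T) : IsRegularElemIn T c :=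
  ⟨hcT, fun _ _ h => hc.mul_right_eq_zero.mp h, fun _ _ h => hc.mul_left_eq_zero.mp h⟩

theorem IsOrderIn.exists_isRegularElemIn_mem (hT : IsOrderIn T) (hI : IsRightModSet T I)
    {a : Q} (haI : a ∈ I) (ha : IsUnit a) : ∃ c ∈ I, IsRegularElemIn T c := by
  obtain ⟨c, b, hcT, hb, rfl⟩ := hT.2.2 a
  exact ⟨a * b, hI.2.2.2 a haI b hb.1, (ha.mul (hT.1 b hb)).isRegularElemIn hcT⟩

end Colon

theorem nonPrincipalRightDivisorial_descends_general
    {Q : Type*} [Ring Q] [IsArtinianRing Q]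
    (T S : Subring Q) (hT : IsLocalOrder T) (hS : IsLocalOrder S)
    (hTS : (T : Set Q) ⊂ (S : Set Q))
    (hprimes : ∀ P : Set Q, IsPrimeIdealSet T P ↔ IsPrimeIdealSet S P)
    (I : Set Q) (hI : IsRightSIdeal S I) (hdiv : nuR S I = I)
    (hnp : ¬∃ x : Q, I = principalRight S x) :
    IsRightSIdeal T I ∧ nuR T I = I := by
  obtain ⟨hSord, M, hM⟩ := hS
  obtain ⟨hImod, ⟨a, haI, hareg⟩, u, huI⟩ := hI
  have hMT : M ⊆ T := ((hprimes M).mpr hM.isPrimeIdealSet).1.2.2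
  have hcolon : colonL (S : Set Q) I ⊆ colonL (T : Set Q) I := fun q hq z hz =>
    hMT <| of_not_not fun hqz => hnp ⟨z, hM.eq_principalRight_of_mul_not_mem hImod hq hz hqz⟩
  have hImodT : IsRightModSet T I := hImod.of_le hTS.1
  refine ⟨⟨hImodT, hT.1.exists_isRegularElemIn_mem hImodT haI (hSord.1 a hareg), u, hcolon huI⟩,
    ?_⟩
  exact ((nuR_subset_nuR_of_colonL_subset hTS.1 hcolon).trans hdiv.le).antisymm (subset_nuR T I)

/-- Proposition 3.3. Let `T ⊂ S` be local orders in a simple Artinian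
ring `Q` with the same prime ideals. Then each non-principal right divisorial ideal of
`S` is a right divisorial ideal of `T`. -/
theorem nonPrincipalRightDivisorial_descends
    {Q : Type*} [Ring Q] [IsSimpleRing Q] [IsArtinianRing Q]
    (T S : Subring Q) (hT : IsLocalOrder T) (hS : IsLocalOrder S)
    (hTS : (T : Set Q) ⊂ (S : Set Q))
    (hprimes : ∀ P : Set Q, IsPrimeIdealSet T P ↔ IsPrimeIdealSet S P)
    (I : Set Q) (hI : IsRightSIdeal S I) (hdiv : nuR S I = I)
    (hnp : ¬∃ x : Q, I = principalRight S x) :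
    IsRightSIdeal T I ∧ nuR T I = I :=
  nonPrincipalRightDivisorial_descends_general T S hT hS hTS hprimes I hI hdiv hnp
end
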